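/- For every α ∈ ℚ̄, we have H(α) ≥ H(H(α)), with equality if and only if H(α) = a^b for some a ∈ ℕ and some positive rational number b. -/

import Mathlib

open Polynomial Filter
open scoped Classical

noncomputable section

/-- The Mahler measure of a complex polynomial. -/
noncomputable def cMahler (p : Polynomial ℂ) : ℝ :=
  ‖p.leadingCoeff‖ * (p.roots.map (fun z => max 1 ‖z‖)).prod

/-- The Mahler measure of an integer polynomial (via its complex roots). -/
noncomputable def zMahler (P : Polynomial ℤ) : ℝ :=
  cMahler (P.map (algebraMap ℤ ℂ))

/-- `P` is a minimal polynomial of `α` in `ℤ[t]` with positive leading coefficient. -/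
def IsIntMinpoly (α : ℂ) (P : Polynomial ℤ) : Prop :=
  Irreducible P ∧ 0 < P.leadingCoeff ∧ Polynomial.aeval α P = 0

/-- The absolute multiplicative Weil height of an algebraic number `α`:
`H(α)^d` equals the Mahler measure of a minimal polynomial of `α` in `ℤ[t]`. -/
noncomputable def height (α : ℂ) : ℝ :=
  if h : ∃ P : Polynomial ℤ, IsIntMinpoly α P
  then zMahler h.choose ^ (((h.choose.natDegree : ℝ))⁻¹)
  else 1

/-- The degree `[ℚ(α):ℚ]` of an algebraic number `α`. -/
noncomputable def degQ (α : ℂ) : ℕ := (minpoly ℚ α).natDegree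

/-- The number of conjugates of `α` lying inside the open unit disk. -/
noncomputable def numConjInDisk (α : ℂ) : ℕ :=
  Multiset.card (((minpoly ℚ α).map (algebraMap ℚ ℂ)).roots.filter
    (fun z => ‖z‖ < 1))

/-- `A(k,d,𝓗)`: algebraic numbers of degree `d`, height `𝓗`, with precisely `k`
conjugates inside the open unit disk. -/
noncomputable def Aset (k d : ℕ) (H : ℝ) : Set ℂ :=
  {α : ℂ | degQ α = d ∧ height α = H ∧ numConjInDisk α = k}

/-- `B(k,d)`: the set of height values of algebraic numbers of degree `d` with
precisely `k` conjugates inside the open unit disk. -/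
noncomputable def Bset (k d : ℕ) : Set ℝ :=
  {x : ℝ | ∃ α : ℂ, degQ α = d ∧ numConjInDisk α = k ∧ height α = x}

/-- `B(k,d,𝓗)`: the height values in `B(k,d)` that are at most `𝓗`. -/
noncomputable def BsetBdd (k d : ℕ) (H : ℝ) : Set ℝ :=
  Bset k d ∩ Set.Iic H

end

/-!
Let `P = a ∏ (X - αᵢ)` be the minimal polynomial of `α` over `ℤ`, of degree `d`, so that
`β = H(α)` satisfies `β ^ d = M(P) = |s|` with `s = a ∏_{|αᵢ| ≥ 1} αᵢ`. Valuation theory shows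
that `a` times any product of distinct roots of `P` is an algebraic integer, so `s` is one; `s` is
real because the roots of `P` are stable under complex conjugation, so `β ^ (2 d) = s ^ 2` and `β`
is an algebraic integer. An embedding of the algebraic numbers into `ℂ` sending `β` to a conjugate
`z` sends `s` to `a` times a product of distinct roots of `P`, so
`|z| ^ (2 d) ≤ M(P) ^ 2 = β ^ (2 d)`.

Hence `H(β) ≤ β`. For `β > 1`, equality forces every conjugate of `β` to have absolute value `β`,
so `β ^ deg β = |N(β)|` is a natural number; conversely, if `β ^ q = m` then every conjugate `z`
satisfies `z ^ q = m`, so `|z| = β`.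
-/

section ValuationRings

open Finset

theorem Finset.prod_le_prod_filter_one_lt {Γ₀ ι : Type*} [LinearOrderedCommGroupWithZero Γ₀]
    {s t : Finset ι} (g : ι → Γ₀) (ht : t ⊆ s) :
    ∏ i ∈ t, g i ≤ ∏ i ∈ s with 1 < g i, g i :=
  calc ∏ i ∈ t, g i = (∏ i ∈ t with 1 < g i, g i) * ∏ i ∈ t with ¬ 1 < g i, g i :=
        (prod_filter_mul_prod_filter_not t _ _).symm
    _ ≤ ∏ i ∈ t with 1 < g i, g i :=
        mul_le_of_le_one_right' (prod_le_one' fun _ hi ↦ not_lt.1 (mem_filter.1 hi).2)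
    _ ≤ ∏ i ∈ s with 1 < g i, g i :=
        prod_le_prod_of_subset_of_one_le' (filter_subset_filter _ ht)
          fun _ hi _ ↦ (mem_filter.1 hi).2.le

theorem Finset.prod_lt_prod_filter_one_lt {Γ₀ ι : Type*} [LinearOrderedCommGroupWithZero Γ₀]
    [DecidableEq ι] {s t : Finset ι} (g : ι → Γ₀) (ht : t ⊆ s)
    (hcard : #t = #{i ∈ s | 1 < g i}) (hne : t ≠ {i ∈ s | 1 < g i}) :
    ∏ i ∈ t, g i < ∏ i ∈ s with 1 < g i, g i := by
  set N := {i ∈ s | 1 < g i}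
  set tN := {i ∈ t | 1 < g i}
  obtain ⟨j, hjN, hjt⟩ : ∃ j ∈ N, j ∉ tN := by
    by_contra! h
    exact hne (eq_of_subset_of_card_le (fun i hi ↦ filter_subset _ _ (h i hi)) hcard.le).symm
  have hne_zero : ∏ i ∈ tN, g i ≠ 0 :=
    prod_ne_zero_iff.2 fun i hi ↦ ne_zero_of_lt (mem_filter.1 hi).2
  have hone_lt : 1 < ∏ i ∈ N \ tN, g i := by
    rw [← mul_prod_erase _ _ (mem_sdiff.2 ⟨hjN, hjt⟩)]
    exact (mem_filter.1 hjN).2.trans_le <| le_mul_of_one_le_right' <|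
      one_le_prod' fun i hi ↦ (mem_filter.1 (mem_sdiff.1 (mem_of_mem_erase hi)).1).2.le
  calc ∏ i ∈ t, g i ≤ ∏ i ∈ tN, g i := prod_le_prod_filter_one_lt g subset_rfl
    _ < (∏ i ∈ tN, g i) * ∏ i ∈ N \ tN, g i :=
        lt_mul_of_one_lt_right (zero_lt_iff.2 hne_zero) hone_lt
    _ = ∏ i ∈ N, g i := by rw [mul_comm, prod_sdiff (filter_subset_filter _ ht)]

theorem isIntegral_of_forall_mem_valuationSubring {K : Type*} [Field K] {x : K}
    (h : ∀ V : ValuationSubring K, x ∈ V) : IsIntegral ℤ x := by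
  by_contra hx
  obtain ⟨V, -, hxV⟩ :=
    Subring.exists_le_valuationSubring_of_isIntegrallyClosedIn
      (R := (integralClosure ℤ K).toSubring) hx
  exact hxV (h V)

/-- All other terms of the elementary symmetric function have strictly smaller valuation. -/
theorem Valuation.map_esymm_card_filter_one_lt {K Γ₀ : Type*} [CommRing K] [DecidableEq K]
    [LinearOrderedCommGroupWithZero Γ₀] (v : Valuation K Γ₀) (s : Finset K) :
    v (s.val.esymm #{x ∈ s | 1 < v x}) = ∏ x ∈ s with 1 < v x, v x := by
  set N := {x ∈ s | 1 < v x}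
  have hN : N ∈ powersetCard #N s := mem_powersetCard.2 ⟨filter_subset _ _, rfl⟩
  have hvN : v (N.prod id) = ∏ x ∈ N, v x := map_prod v _ _
  have hvN_ne : ∏ x ∈ N, v x ≠ 0 :=
    prod_ne_zero_iff.2 fun x hx ↦ ne_zero_of_lt (mem_filter.1 hx).2
  rw [← Multiset.map_id s.val, esymm_map_val, ← add_sum_erase _ _ hN]
  refine (v.map_add_eq_of_lt_left ?_).trans hvN
  rw [hvN]
  refine v.map_sum_lt hvN_ne fun t ht ↦ ?_
  obtain ⟨htN, ht⟩ := mem_erase.1 ht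
  obtain ⟨hts, htcard⟩ := mem_powersetCard.1 ht
  rw [map_prod]
  exact prod_lt_prod_filter_one_lt _ hts htcard htN

/-- In a valuation ring, with `N` the roots of valuation `> 1`, the coefficient
`± lc f * e_{#N}(roots)` of `f` has valuation `v (lc f) * ∏ x ∈ N, v x`, which dominates
`v (lc f * ∏ x ∈ t, x)`. -/
theorem isIntegral_leadingCoeff_mul_prod_of_subset_aroots {K : Type*} [Field K] [CharZero K]
    [DecidableEq K] {f : ℤ[X]} (hsplit : (f.map (algebraMap ℤ K)).Splits)
    (hnodup : (f.aroots K).Nodup) {t : Finset K} (ht : t ⊆ (f.aroots K).toFinset) :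
    IsIntegral ℤ ((f.leadingCoeff : K) * ∏ x ∈ t, x) := by
  refine isIntegral_of_forall_mem_valuationSubring fun V ↦ ?_
  rw [← V.valuation_le_one_iff]
  set v := V.valuation
  set R := f.aroots K
  have hR : R.toFinset.val = R := by rw [Multiset.toFinset_val, hnodup.dedup]
  set n := #{x ∈ R.toFinset | 1 < v x}
  have hn : n ≤ R.card := hR ▸ card_le_card (filter_subset _ _)
  have hcoeff : (f.coeff (R.card - n) : K) = f.leadingCoeff * ((-1) ^ n * R.esymm n) := by
    have h := congrArg (coeff · (R.card - n)) hsplit.eq_prod_roots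
    simp only [coeff_map, eq_intCast, coeff_C_mul,
      leadingCoeff_map_of_injective (RingHom.injective_int (algebraMap ℤ K))] at h
    rwa [← aroots_def, Multiset.prod_X_sub_C_coeff _ (Nat.sub_le _ _), Nat.sub_sub_self hn] at h
  calc v (f.leadingCoeff * ∏ x ∈ t, x) = v f.leadingCoeff * ∏ x ∈ t, v x := by
        rw [map_mul, map_prod]
    _ ≤ v f.leadingCoeff * ∏ x ∈ R.toFinset with 1 < v x, v x :=
        mul_le_mul_right (prod_le_prod_filter_one_lt _ ht) _
    _ = v (f.coeff (R.card - n)) := by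
        rw [hcoeff, map_mul, map_mul, map_pow, v.map_neg, v.map_one, one_pow, one_mul, ← hR,
          v.map_esymm_card_filter_one_lt, hR]
    _ ≤ 1 := V.valuation_le_one ⟨_, intCast_mem V _⟩

end ValuationRings

theorem Multiset.forall_eq_of_prod_map_eq_pow_card {ι R : Type*} [CommSemiring R] [LinearOrder R]
    [IsStrictOrderedRing R] {s : Multiset ι} {f : ι → R} {c : R} (hpos : ∀ i ∈ s, 0 < f i)
    (hle : ∀ i ∈ s, f i ≤ c) (heq : (s.map f).prod = c ^ s.card) : ∀ i ∈ s, f i = c := by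
  by_contra! h
  obtain ⟨i, hi, hne⟩ := h
  obtain ⟨t, rfl⟩ := Multiset.exists_cons_of_mem hi
  have hpos_t : 0 < (t.map f).prod :=
    Multiset.prod_pos fun _ hx ↦ by
      obtain ⟨j, hj, rfl⟩ := Multiset.mem_map.1 hx
      exact hpos j (Multiset.mem_cons_of_mem hj)
  have hle_t : (t.map f).prod ≤ c ^ t.card := by
    simpa using Multiset.prod_map_le_prod_map₀ f (fun _ ↦ c)
      (fun j hj ↦ (hpos j (Multiset.mem_cons_of_mem hj)).le)
      fun j hj ↦ hle j (Multiset.mem_cons_of_mem hj)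
  have hlt : f i < c := (hle i hi).lt_of_ne hne
  rw [Multiset.map_cons, Multiset.prod_cons, Multiset.card_cons, pow_succ'] at heq
  have hc : 0 ≤ c := ((hpos i hi).trans hlt).le
  exact (mul_lt_mul_of_pos_right hlt hpos_t).not_ge
    (heq ▸ mul_le_mul_of_nonneg_left hle_t hc)

theorem Polynomial.Splits.map_aroots_int {E L : Type*} [Field E] [CommRing L] [IsDomain L]
    {P : ℤ[X]} (hP : (P.map (algebraMap ℤ E)).Splits) (σ : E →+* L) :
    (P.aroots E).map σ = P.aroots L := by
  rw [aroots_def, aroots_def, ← hP.roots_map σ, map_map,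
    RingHom.ext_int (σ.comp _) (algebraMap ℤ L)]

theorem zMahler_eq (P : ℤ[X]) :
    zMahler P = |(P.leadingCoeff : ℝ)| * ((P.aroots ℂ).map fun z ↦ max 1 ‖z‖).prod := by
  rw [zMahler, cMahler, leadingCoeff_map_of_injective (RingHom.injective_int _), eq_intCast,
    Complex.norm_intCast, aroots_def]

section NodupRoots

open Finset

variable {P : ℤ[X]} (hP : (P.aroots ℂ).Nodup)
include hP

theorem zMahler_eq_prod_toFinset :
    zMahler P = |(P.leadingCoeff : ℝ)| * ∏ z ∈ (P.aroots ℂ).toFinset, max 1 ‖z‖ := by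
  rw [zMahler_eq, prod_eq_multiset_prod, Multiset.toFinset_val, hP.dedup]

theorem norm_leadingCoeff_mul_prod_le_zMahler {t : Finset ℂ} (ht : t ⊆ (P.aroots ℂ).toFinset) :
    ‖(P.leadingCoeff : ℂ) * ∏ z ∈ t, z‖ ≤ zMahler P := by
  rw [zMahler_eq_prod_toFinset hP, norm_mul, norm_prod, Complex.norm_intCast]
  gcongr
  calc ∏ z ∈ t, ‖z‖ ≤ ∏ z ∈ t, max 1 ‖z‖ :=
        prod_le_prod (fun _ _ ↦ norm_nonneg _) fun _ _ ↦ le_max_right _ _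
    _ ≤ ∏ z ∈ (P.aroots ℂ).toFinset, max 1 ‖z‖ :=
        prod_le_prod_of_subset_of_one_le ht (fun _ _ ↦ zero_le_one.trans (le_max_left _ _))
          fun _ _ _ ↦ le_max_left _ _

theorem norm_leadingCoeff_mul_prod_filter_one_le_norm :
    ‖(P.leadingCoeff : ℂ) * ∏ z ∈ (P.aroots ℂ).toFinset with 1 ≤ ‖z‖, z‖ = zMahler P := by
  rw [zMahler_eq_prod_toFinset hP, norm_mul, norm_prod, Complex.norm_intCast,
    ← prod_filter_mul_prod_filter_not _ (fun z : ℂ ↦ 1 ≤ ‖z‖) fun z ↦ max 1 ‖z‖]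
  congr 1
  rw [prod_congr rfl fun z hz ↦ max_eq_right (mem_filter.1 hz).2,
    prod_congr rfl fun z hz ↦ max_eq_left (not_le.1 (mem_filter.1 hz).2).le, prod_const_one,
    mul_one]

end NodupRoots

section Conjugates

open Finset ComplexConjugate

theorem conj_prod_aroots_filter_one_le_norm (P : ℤ[X]) :
    conj (∏ z ∈ (P.aroots ℂ).toFinset with 1 ≤ ‖z‖, z) =
      ∏ z ∈ (P.aroots ℂ).toFinset with 1 ≤ ‖z‖, z := by
  have hmem : ∀ z ∈ {z ∈ (P.aroots ℂ).toFinset | 1 ≤ ‖z‖},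
      conj z ∈ {z ∈ (P.aroots ℂ).toFinset | 1 ≤ ‖z‖} := by
    intro z hz
    simp only [mem_filter, Multiset.mem_toFinset, mem_aroots, Complex.norm_conj] at hz ⊢
    refine ⟨⟨hz.1.1, ?_⟩, hz.2⟩
    rw [← RingHom.toIntAlgHom_coe, aeval_algHom_apply, hz.1.2, map_zero]
  rw [map_prod]
  exact prod_nbij' conj conj hmem hmem (fun z _ ↦ star_star z) (fun z _ ↦ star_star z)
    fun _ _ ↦ rfl

theorem sq_leadingCoeff_mul_prod_filter_one_le_norm {P : ℤ[X]} (hP : (P.aroots ℂ).Nodup) :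
    ((P.leadingCoeff : ℂ) * ∏ z ∈ (P.aroots ℂ).toFinset with 1 ≤ ‖z‖, z) ^ 2 =
      (zMahler P : ℂ) ^ 2 := by
  set s := (P.leadingCoeff : ℂ) * ∏ z ∈ (P.aroots ℂ).toFinset with 1 ≤ ‖z‖, z
  have hs : conj s = s := by rw [map_mul, map_intCast, conj_prod_aroots_filter_one_le_norm]
  calc s ^ 2 = s * conj s := by rw [hs, sq]
    _ = (‖s‖ : ℂ) ^ 2 := Complex.mul_conj' s
    _ = (zMahler P : ℂ) ^ 2 := by rw [norm_leadingCoeff_mul_prod_filter_one_le_norm hP]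

theorem exists_isIntegral_sq_eq_zMahler_sq {E : Type*} [Field E] [CharZero E] (ι : E →+* ℂ)
    {P : ℤ[X]} (hsplit : (P.map (algebraMap ℤ E)).Splits) (hP : (P.aroots ℂ).Nodup) :
    ∃ s : E, IsIntegral ℤ s ∧ ι s ^ 2 = (zMahler P : ℂ) ^ 2 ∧
      ∀ σ : E →+* ℂ, ‖σ s‖ ≤ zMahler P := by
  have hnodup : (P.aroots E).Nodup := Multiset.Nodup.of_map ι (hsplit.map_aroots_int ι ▸ hP)
  refine ⟨P.leadingCoeff * ∏ x ∈ (P.aroots E).toFinset with 1 ≤ ‖ι x‖, x,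
    isIntegral_leadingCoeff_mul_prod_of_subset_aroots hsplit hnodup (filter_subset _ _), ?_,
    fun σ ↦ ?_⟩
  · rw [map_mul, map_intCast, map_prod, ← prod_image (f := fun z : ℂ ↦ z) ι.injective.injOn,
      ← filter_image (p := fun z : ℂ ↦ 1 ≤ ‖z‖), ← Multiset.toFinset_map, hsplit.map_aroots_int ι]
    exact sq_leadingCoeff_mul_prod_filter_one_le_norm hP
  · rw [map_mul, map_intCast, map_prod, ← prod_image (f := fun z : ℂ ↦ z) σ.injective.injOn]
    refine norm_leadingCoeff_mul_prod_le_zMahler hP ?_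
    rw [← hsplit.map_aroots_int σ, Multiset.toFinset_map]
    exact image_subset_image (filter_subset _ _)

end Conjugates

theorem exists_algHom_algebraicClosure_apply_eq {x z : ℂ} (hx : IsIntegral ℚ x)
    (hz : aeval z (minpoly ℚ x) = 0) :
    ∃ σ : algebraicClosure ℚ ℂ →ₐ[ℚ] ℂ, σ ⟨x, hx⟩ = z := by
  refine IntermediateField.exists_algHom_of_splits_of_aeval
    (fun s ↦ ⟨IntermediateField.isIntegral_iff.2 s.2, IsAlgClosed.splits _⟩) ?_
  rwa [← minpoly.algHom_eq (algebraicClosure ℚ ℂ).val Subtype.val_injective]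

theorem isIntegral_and_norm_le_of_pow_eq_zMahler {P : ℤ[X]} (hP : (P.aroots ℂ).Nodup) {β : ℝ}
    (hβ : 0 ≤ β) {d : ℕ} (hd : d ≠ 0) (hβd : β ^ d = zMahler P) :
    IsIntegral ℤ (β : ℂ) ∧ ∀ z ∈ (minpoly ℤ (β : ℂ)).aroots ℂ, ‖z‖ ≤ β := by
  let E := algebraicClosure ℚ ℂ
  have : IsAlgClosed E := (algebraicClosure.isAlgClosure ℚ ℂ).isAlgClosed
  obtain ⟨s, hs_int, hs_sq, hs_norm⟩ :=
    exists_isIntegral_sq_eq_zMahler_sq (algebraMap E ℂ) (IsAlgClosed.splits _) hP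
  have hβs : (β : ℂ) ^ (2 * d) = algebraMap E ℂ s ^ 2 := by
    rw [pow_mul', ← Complex.ofReal_pow, hβd, hs_sq]
  have hint : IsIntegral ℤ (β : ℂ) :=
    (IsIntegral.pow_iff (by positivity)).1
      (hβs ▸ (hs_int.map (algebraMap E ℂ).toIntAlgHom).pow 2)
  refine ⟨hint, fun z hz ↦ ?_⟩
  obtain ⟨σ, hσ⟩ := exists_algHom_algebraicClosure_apply_eq hint.tower_top (z := z) <| by
    rw [minpoly.isIntegrallyClosed_eq_field_fractions' ℚ hint, aeval_map_algebraMap]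
    exact (mem_aroots.1 hz).2
  have hβsE : (⟨β, hint.tower_top⟩ : E) ^ (2 * d) = s ^ 2 :=
    (algebraMap E ℂ).injective (by simpa using hβs)
  have hz : z ^ (2 * d) = σ s ^ 2 := by rw [← hσ, ← map_pow, hβsE, map_pow]
  have : ‖z‖ ^ (2 * d) ≤ β ^ (2 * d) := by
    rw [← norm_pow, hz, norm_pow, pow_mul', hβd]
    exact pow_le_pow_left₀ (norm_nonneg _) (hs_norm σ) 2
  exact (pow_le_pow_iff_left₀ (norm_nonneg _) hβ (by positivity)).1 this

namespace IsIntMinpoly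

variable {α : ℂ} {P : ℤ[X]} (hP : IsIntMinpoly α P)
include hP

theorem natDegree_pos : 0 < P.natDegree :=
  natDegree_pos_of_aeval_root hP.1.ne_zero hP.2.2 fun _ ↦
    (map_eq_zero_iff _ (RingHom.injective_int _)).1

theorem nodup_aroots : (P.aroots ℂ).Nodup := by
  have hirr : Irreducible (P.map (algebraMap ℤ ℚ)) :=
    ((hP.1.isPrimitive hP.natDegree_pos.ne').irreducible_iff_irreducible_map_fraction_map).1 hP.1
  rw [← aroots_map ℂ ℚ]
  exact nodup_roots hirr.separable.map

theorem one_le_zMahler : 1 ≤ zMahler P := by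
  rw [zMahler_eq]
  refine one_le_mul_of_one_le_of_one_le ?_ (Multiset.one_le_prod_map fun _ _ ↦ le_max_left _ _)
  rw [abs_of_pos (by exact_mod_cast hP.2.1)]
  exact_mod_cast hP.2.1

theorem eq_minpoly (hα : IsIntegral ℤ α) : P = minpoly ℤ α := by
  obtain ⟨u, hu⟩ := (minpoly.irreducible hα).associated_of_dvd hP.1
    (minpoly.isIntegrallyClosed_dvd hα hP.2.2)
  obtain ⟨c, hc, hcu⟩ := Polynomial.isUnit_iff.1 u.isUnit
  have hlc : P.leadingCoeff = c := by
    rw [← hu, leadingCoeff_mul, (minpoly.monic hα).leadingCoeff, ← hcu, leadingCoeff_C, one_mul]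
  obtain rfl : c = 1 := (Int.isUnit_iff.1 hc).resolve_right fun h ↦ by
    have := hP.2.1; omega
  rw [← hu, ← hcu, map_one, mul_one]

end IsIntMinpoly

theorem isIntMinpoly_minpoly {x : ℂ} (hx : IsIntegral ℤ x) : IsIntMinpoly x (minpoly ℤ x) :=
  ⟨minpoly.irreducible hx, by rw [(minpoly.monic hx).leadingCoeff]; exact one_pos,
    minpoly.aeval ℤ x⟩

theorem height_eq_of_isIntegral {x : ℂ} (hx : IsIntegral ℤ x) :
    height x = (((minpoly ℤ x).aroots ℂ).map fun z ↦ max 1 ‖z‖).prod ^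
      ((minpoly ℤ x).natDegree : ℝ)⁻¹ := by
  have h : ∃ P, IsIntMinpoly x P := ⟨_, isIntMinpoly_minpoly hx⟩
  rw [height, dif_pos h, h.choose_spec.eq_minpoly hx, zMahler_eq,
    (minpoly.monic hx).leadingCoeff, Int.cast_one, abs_one, one_mul]

section AlgebraicInteger

variable {b : ℝ} (hint : IsIntegral ℤ (b : ℂ))
include hint

theorem height_le_of_forall_norm_le (hb : 1 ≤ b)
    (hbound : ∀ z ∈ (minpoly ℤ (b : ℂ)).aroots ℂ, ‖z‖ ≤ b) : height b ≤ b := by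
  have hD := (minpoly.natDegree_pos hint).ne'
  have hprod : (((minpoly ℤ (b : ℂ)).aroots ℂ).map fun z ↦ max 1 ‖z‖).prod ≤
      b ^ (minpoly ℤ (b : ℂ)).natDegree := by
    simpa [IsAlgClosed.card_aroots_eq_natDegree] using
      Multiset.prod_map_le_prod_map₀ _ (fun _ ↦ b) (fun _ _ ↦ zero_le_one.trans (le_max_left _ _))
        fun z hz ↦ max_le hb (hbound z hz)
  rw [height_eq_of_isIntegral hint]
  calc _ ≤ (b ^ (minpoly ℤ (b : ℂ)).natDegree) ^ ((minpoly ℤ (b : ℂ)).natDegree : ℝ)⁻¹ :=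
        Real.rpow_le_rpow
          (Multiset.prod_map_nonneg fun _ _ ↦ zero_le_one.trans (le_max_left _ _)) hprod
          (by positivity)
    _ = b := Real.pow_rpow_inv_natCast (by linarith) hD

theorem height_eq_self_of_forall_norm_eq (hb : 1 ≤ b)
    (hnorm : ∀ z ∈ (minpoly ℤ (b : ℂ)).aroots ℂ, ‖z‖ = b) : height b = b := by
  rw [height_eq_of_isIntegral hint,
    Multiset.map_congr rfl fun z hz ↦ by rw [hnorm z hz, max_eq_right hb], Multiset.map_const',
    Multiset.prod_replicate, IsAlgClosed.card_aroots_eq_natDegree,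
    Real.pow_rpow_inv_natCast (by linarith) (minpoly.natDegree_pos hint).ne']

theorem forall_norm_eq_of_height_eq (hb : 1 < b)
    (hbound : ∀ z ∈ (minpoly ℤ (b : ℂ)).aroots ℂ, ‖z‖ ≤ b) (heq : height b = b) :
    ∀ z ∈ (minpoly ℤ (b : ℂ)).aroots ℂ, ‖z‖ = b := by
  rw [height_eq_of_isIntegral hint] at heq
  have hprod : (((minpoly ℤ (b : ℂ)).aroots ℂ).map fun z ↦ max 1 ‖z‖).prod =
      b ^ ((minpoly ℤ (b : ℂ)).aroots ℂ).card := by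
    rw [IsAlgClosed.card_aroots_eq_natDegree,
      ← congrArg (· ^ (minpoly ℤ (b : ℂ)).natDegree) heq]
    exact (Real.rpow_inv_natCast_pow
      (Multiset.prod_map_nonneg fun _ _ ↦ zero_le_one.trans (le_max_left _ _))
      (minpoly.natDegree_pos hint).ne').symm
  intro z hz
  have hmax := Multiset.forall_eq_of_prod_map_eq_pow_card
    (fun _ _ ↦ zero_lt_one.trans_le (le_max_left _ _)) (fun z hz ↦ max_le hb.le (hbound z hz))
    hprod z hz
  rcases le_total ‖z‖ 1 with h | h
  · rw [max_eq_left h] at hmax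
    exact absurd hmax hb.ne
  · rwa [max_eq_right h] at hmax

theorem natAbs_coeff_zero_minpoly_eq_pow
    (hnorm : ∀ z ∈ (minpoly ℤ (b : ℂ)).aroots ℂ, ‖z‖ = b) :
    (((minpoly ℤ (b : ℂ)).coeff 0).natAbs : ℝ) = b ^ (minpoly ℤ (b : ℂ)).natDegree := by
  have h := (IsAlgClosed.splits ((minpoly ℤ (b : ℂ)).map (algebraMap ℤ ℂ))
    ).coeff_zero_eq_prod_roots_of_monic ((minpoly.monic hint).map _)
  rw [coeff_map, eq_intCast, ← aroots_def] at h
  have hprod : ‖((minpoly ℤ (b : ℂ)).aroots ℂ).prod‖ =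
      (((minpoly ℤ (b : ℂ)).aroots ℂ).map (‖·‖)).prod :=
    map_multiset_prod (normHom : ℂ →*₀ ℝ) _
  rw [Nat.cast_natAbs, Int.cast_abs, ← Complex.norm_intCast, h, norm_mul, norm_pow, norm_neg,
    norm_one, one_pow, one_mul, hprod, Multiset.map_congr rfl hnorm, Multiset.map_const',
    Multiset.prod_replicate, IsAlgClosed.card_aroots_eq_natDegree]

end AlgebraicInteger

theorem isIntegral_and_forall_norm_eq_of_pow_eq_natCast {b : ℝ} (hb : 0 ≤ b) {q m : ℕ}
    (hq : q ≠ 0) (hm : b ^ q = m) :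
    IsIntegral ℤ (b : ℂ) ∧ ∀ z ∈ (minpoly ℤ (b : ℂ)).aroots ℂ, ‖z‖ = b := by
  have hbC : (b : ℂ) ^ q = m := by exact_mod_cast congrArg ((↑) : ℝ → ℂ) hm
  have hint : IsIntegral ℤ (b : ℂ) :=
    (IsIntegral.pow_iff (Nat.pos_of_ne_zero hq)).1 (hbC ▸ isIntegral_algebraMap (x := (m : ℤ)))
  refine ⟨hint, fun z hz ↦ ?_⟩
  obtain ⟨g, hg⟩ :=
    minpoly.isIntegrallyClosed_dvd hint (p := X ^ q - C (m : ℤ)) (by simp [hbC])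
  have hz : z ^ q = m := by
    have := congrArg (aeval z) hg
    rwa [map_mul, (mem_aroots.1 hz).2, zero_mul, map_sub, map_pow, aeval_X, aeval_C, eq_intCast,
      Int.cast_natCast, sub_eq_zero] at this
  have : ‖z‖ ^ q = b ^ q := by rw [← norm_pow, hz, Complex.norm_natCast, hm]
  exact (pow_left_inj₀ (norm_nonneg z) hb hq).1 this

theorem one_le_height_and_isIntegral_and_forall_norm_le (α : ℂ) :
    1 ≤ height α ∧ IsIntegral ℤ (height α : ℂ) ∧
      ∀ z ∈ (minpoly ℤ (height α : ℂ)).aroots ℂ, ‖z‖ ≤ height α := by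
  by_cases h : ∃ P, IsIntMinpoly α P
  · have hP := h.choose_spec
    have hd := hP.natDegree_pos
    have hM := hP.one_le_zMahler
    have hheight : height α = zMahler h.choose ^ (h.choose.natDegree : ℝ)⁻¹ := by
      rw [height, dif_pos h]
    have h1 : 1 ≤ height α := hheight ▸ Real.one_le_rpow hM (by positivity)
    refine ⟨h1, isIntegral_and_norm_le_of_pow_eq_zMahler hP.nodup_aroots (by linarith) hd.ne' ?_⟩
    rw [hheight, Real.rpow_inv_natCast_pow (by linarith) hd.ne']
  · obtain ⟨hint, hnorm⟩ :=
      isIntegral_and_forall_norm_eq_of_pow_eq_natCast (b := 1) zero_le_one one_ne_zero (m := 1)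
        (by norm_num)
    rw [height, dif_neg h]
    exact ⟨le_rfl, hint, fun z hz ↦ (hnorm z hz).le⟩

theorem pow_den_eq_natCast_of_eq_rpow {β : ℝ} {a : ℕ} {r : ℚ} (hr : 0 < r)
    (h : β = (a : ℝ) ^ (r : ℝ)) : β ^ r.den = ((a ^ r.num.toNat : ℕ) : ℝ) := by
  have hr' : (r : ℝ) * r.den = r.num.toNat := by
    rw [← Int.cast_natCast r.num.toNat, Int.toNat_of_nonneg (Rat.num_pos.2 hr).le]
    exact_mod_cast Rat.mul_den_eq_num r
  rw [h, ← Real.rpow_natCast, ← Real.rpow_mul (Nat.cast_nonneg a), hr', Real.rpow_natCast,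
    Nat.cast_pow]

theorem eq_natCast_rpow_of_pow_eq_natCast {β : ℝ} (hβ : 0 ≤ β) {q m : ℕ} (hq : q ≠ 0)
    (h : β ^ q = m) : β = (m : ℝ) ^ (((q : ℚ)⁻¹ : ℚ) : ℝ) := by
  rw [← h, Rat.cast_inv, Rat.cast_natCast, Real.pow_rpow_inv_natCast hβ hq]

theorem height_eq_self_iff {b : ℝ} (hb : 1 ≤ b) (hint : IsIntegral ℤ (b : ℂ))
    (hbound : ∀ z ∈ (minpoly ℤ (b : ℂ)).aroots ℂ, ‖z‖ ≤ b) :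
    height b = b ↔ ∃ a : ℕ, 0 < a ∧ ∃ r : ℚ, 0 < r ∧ b = (a : ℝ) ^ (r : ℝ) := by
  constructor
  · intro heq
    rcases hb.eq_or_lt with rfl | hb1
    · exact ⟨1, one_pos, 1, one_pos, by norm_num⟩
    have hD := minpoly.natDegree_pos hint
    have hN := natAbs_coeff_zero_minpoly_eq_pow hint
      (forall_norm_eq_of_height_eq hint hb1 hbound heq)
    refine ⟨_, ?_, _, inv_pos.2 (Nat.cast_pos.2 hD),
      eq_natCast_rpow_of_pow_eq_natCast (by linarith) hD.ne' hN.symm⟩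
    exact_mod_cast hN ▸ pow_pos (zero_lt_one.trans hb1) _
  · rintro ⟨a, -, r, hr, h⟩
    obtain ⟨hint', hnorm⟩ := isIntegral_and_forall_norm_eq_of_pow_eq_natCast (by linarith)
      r.den_ne_zero (pow_den_eq_natCast_of_eq_rpow hr h)
    exact height_eq_self_of_forall_norm_eq hint' hb hnorm

theorem stmt_18_general (α : ℂ) :
    height ((height α : ℝ) : ℂ) ≤ height α ∧
    (height ((height α : ℝ) : ℂ) = height α ↔
      ∃ a : ℕ, 0 < a ∧ ∃ b : ℚ, 0 < b ∧ height α = (a : ℝ) ^ (b : ℝ)) := by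
  obtain ⟨h1, hint, hbound⟩ := one_le_height_and_isIntegral_and_forall_norm_le α
  exact ⟨height_le_of_forall_norm_le hint h1 hbound, height_eq_self_iff h1 hint hbound⟩

/-- for every `α ∈ ℚ̄`, `H(α) ≥ H(H(α))`, with equality if and only if
`H(α) = a^b` for some `a ∈ ℕ` and positive rational `b`. -/
theorem stmt_18 (α : ℂ) (hα : IsAlgebraic ℚ α) :
    height ((height α : ℝ) : ℂ) ≤ height α ∧
    (height ((height α : ℝ) : ℂ) = height α ↔
      ∃ a : ℕ, 0 < a ∧ ∃ b : ℚ, 0 < b ∧ height α = (a : ℝ) ^ (b : ℝ)) :=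
  stmt_18_general α
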